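/- arXiv:2206.06523 — 2 statements merged into one kernel-verified Lean document; each statement's English description precedes it below -/
import Mathlib

section
/- Let V, W : [0,T] → ℝ be differentiable functions satisfying V' = 2W·A and W' = (1-2V)·A for some continuous function A(t), with initial data satisfying W(0)² + V(0)² = V(0). Then W(t)² + V(t)² = V(t) for all t ∈ [0,T]. -/
open Set

theorem hasDerivAt_sq_add_sq_sub_self_eq_zero {V W : ℝ → ℝ} {a t : ℝ}
    (hV : HasDerivAt V (2 * W t * a) t) (hW : HasDerivAt W ((1 - 2 * V t) * a) t) :
    HasDerivAt (fun s => W s ^ 2 + V s ^ 2 - V s) 0 t :=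
  ((hW.pow 2).add (hV.pow 2) |>.sub hV).congr_deriv (by ring)

theorem stmt_5_general (T : ℝ) (V W A : ℝ → ℝ)
    (hV : ∀ t ∈ Icc (0:ℝ) T, HasDerivAt V (2 * W t * A t) t)
    (hW : ∀ t ∈ Icc (0:ℝ) T, HasDerivAt W ((1 - 2 * V t) * A t) t)
    (h0 : W 0 ^ 2 + V 0 ^ 2 = V 0) :
    ∀ t ∈ Icc (0:ℝ) T, W t ^ 2 + V t ^ 2 = V t := by
  have hderiv : ∀ t ∈ Icc (0:ℝ) T, HasDerivAt (fun s => W s ^ 2 + V s ^ 2 - V s) 0 t :=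
    fun t ht => hasDerivAt_sq_add_sq_sub_self_eq_zero (hV t ht) (hW t ht)
  have hconst := constant_of_has_deriv_right_zero
    (fun t ht => (hderiv t ht).continuousAt.continuousWithinAt)
    (fun t ht => (hderiv t (Ico_subset_Icc_self ht)).hasDerivWithinAt)
  intro t ht
  have hdefect : W t ^ 2 + V t ^ 2 - V t = 0 := by
    simpa only [h0, sub_self] using hconst t ht
  exact sub_eq_zero.mp hdefect

/-- invariance of the relation `W² + V² = V` along the flow
`V' = 2W·A`, `W' = (1-2V)·A`. -/
theorem stmt_5 (T : ℝ) (hT : 0 < T) (V W A : ℝ → ℝ)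
    (hA : ContinuousOn A (Icc 0 T))
    (hV : ∀ t ∈ Icc (0:ℝ) T, HasDerivAt V (2 * W t * A t) t)
    (hW : ∀ t ∈ Icc (0:ℝ) T, HasDerivAt W ((1 - 2 * V t) * A t) t)
    (h0 : W 0 ^ 2 + V 0 ^ 2 = V 0) :
    ∀ t ∈ Icc (0:ℝ) T, W t ^ 2 + V t ^ 2 = V t :=
  stmt_5_general T V W A hV hW h0
end

section
/- Let k(t,·) ∈ H¹(ℝ) with ‖k(t,·)‖_{H¹} = E₀ for all t, and define y(t,β) by y + ∫_{-∞}^y k_x²(t,z)dz = β. Then for fixed t, the map β ↦ k(t, y(t,β)) is Lipschitz continuous with constant 1: for β₁ < β₂, |k(t,y(t,β₂)) - k(t,y(t,β₁))| ≤ β₂ - β₁. -/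
open MeasureTheory Set Real

/- The map `y ↦ y + ∫_{-∞}^y k_x²` is increasing, so `y₁ := y(β₁) ≤ y₂ := y(β₂)` and
`β₂ - β₁ = (y₂ - y₁) + ∫_{y₁}^{y₂} k_x²`. Since `2|k_x| ≤ 1 + k_x²`, this dominates twice
`∫_{y₁}^{y₂} |k_x| ≥ |k(y₂) - k(y₁)|`. -/

theorem abs_le_half_one_add_sq (x : ℝ) : |x| ≤ (1 + x ^ 2) / 2 := by
  rw [abs_le]
  constructor <;> nlinarith [sq_nonneg (x + 1), sq_nonneg (x - 1)]

/-- No integrability of `kx` itself is needed: the FTC inequality only asks for an integrable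
upper bound of the derivative, here `(1 + kx²) / 2`. -/
theorem abs_sub_le_half_integral_one_add_sq {k kx : ℝ → ℝ} {a b : ℝ} (hab : a ≤ b)
    (hkd : ∀ x ∈ Icc a b, HasDerivAt k (kx x) x)
    (hint : IntegrableOn (fun x => kx x ^ 2) (Icc a b)) :
    |k b - k a| ≤ ((b - a) + ∫ x in a..b, kx x ^ 2) / 2 := by
  set φ : ℝ → ℝ := fun x => (1 + kx x ^ 2) / 2
  have hφint : IntegrableOn φ (Icc a b) :=
    ((integrableOn_const measure_Icc_lt_top.ne).add hint).div_const 2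
  have hcont : ContinuousOn k (Icc a b) := fun x hx => (hkd x hx).continuousAt.continuousWithinAt
  have hderiv : ∀ x ∈ Ioo a b, HasDerivWithinAt k (kx x) (Ioi x) x :=
    fun x hx => (hkd x (Ioo_subset_Icc_self hx)).hasDerivWithinAt
  have hφ : ∫ x in a..b, φ x = ((b - a) + ∫ x in a..b, kx x ^ 2) / 2 := by
    have hI2 : IntervalIntegrable (fun x => kx x ^ 2) volume a b :=
      (intervalIntegrable_iff_integrableOn_Icc_of_le hab).2 hint
    simp only [φ, intervalIntegral.integral_div,
      intervalIntegral.integral_add intervalIntegrable_const hI2, intervalIntegral.integral_const,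
      smul_eq_mul, mul_one]
  rw [← hφ, abs_sub_le_iff]
  constructor
  · exact intervalIntegral.sub_le_integral_of_hasDeriv_right_of_le hab hcont hderiv hφint
      fun x _ => (le_abs_self _).trans (abs_le_half_one_add_sq _)
  · have h := intervalIntegral.sub_le_integral_of_hasDeriv_right_of_le hab hcont.neg
      (fun x hx => (hderiv x hx).neg) hφint
      fun x _ => (neg_le_abs _).trans (abs_le_half_one_add_sq _)
    simp only [Pi.neg_apply] at h
    linarith

theorem monotone_setIntegral_Iic {f : ℝ → ℝ} (hf : Integrable f) (hf₀ : ∀ x, 0 ≤ f x) :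
    Monotone fun x => ∫ z in Iic x, f z :=
  fun _ _ hxy => setIntegral_mono_set hf.integrableOn (.of_forall hf₀)
    (.of_forall fun _ hz => le_trans hz hxy)

theorem monotone_of_add_comp_eq_self {F y : ℝ → ℝ} (hF : Monotone F)
    (hy : ∀ β, y β + F (y β) = β) : Monotone y := by
  intro β₁ β₂ hβ
  by_contra! h
  have := hF h.le
  linarith [hy β₁, hy β₂]

theorem stmt_11_general (k kx : ℝ → ℝ) (y : ℝ → ℝ)
    (hkd : ∀ x, HasDerivAt k (kx x) x)
    (hint : Integrable (fun z => kx z ^ 2) volume)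
    (hy : ∀ β : ℝ, y β + ∫ z in Iic (y β), kx z ^ 2 = β) :
    ∀ β₁ β₂ : ℝ, β₁ < β₂ → |k (y β₂) - k (y β₁)| ≤ β₂ - β₁ := by
  intro β₁ β₂ hβ
  have hmono : Monotone y :=
    monotone_of_add_comp_eq_self (monotone_setIntegral_Iic hint fun z => sq_nonneg (kx z)) hy
  have hgap : β₂ - β₁ = (y β₂ - y β₁) + ∫ x in y β₁..y β₂, kx x ^ 2 := by
    rw [← intervalIntegral.integral_Iic_sub_Iic hint.integrableOn hint.integrableOn]
    linarith [hy β₁, hy β₂]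
  calc |k (y β₂) - k (y β₁)| ≤ (β₂ - β₁) / 2 := hgap ▸
        abs_sub_le_half_integral_one_add_sq (hmono hβ.le) (fun x _ => hkd x) hint.integrableOn
    _ ≤ β₂ - β₁ := by linarith

/-- with `y(β)` defined by `y + ∫_{-∞}^y k_x² dz = β` (at a fixed time,
`‖k‖_{H¹} = E₀`), the map `β ↦ k(y(β))` is Lipschitz with constant 1. -/
theorem stmt_11 (E₀ : ℝ) (k kx : ℝ → ℝ) (y : ℝ → ℝ)
    (hkd : ∀ x, HasDerivAt k (kx x) x)
    (hint : Integrable (fun z => kx z ^ 2) volume)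
    (hnorm : Real.sqrt (∫ x : ℝ, (k x ^ 2 + kx x ^ 2)) = E₀)
    (hy : ∀ β : ℝ, y β + ∫ z in Iic (y β), kx z ^ 2 = β) :
    ∀ β₁ β₂ : ℝ, β₁ < β₂ → |k (y β₂) - k (y β₁)| ≤ β₂ - β₁ :=
  stmt_11_general k kx y hkd hint hy
end
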